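/- If L̃ attains a global minimum over pairs (ν, μ) of functions S → ℝ, then L also attains a global minimum over such pairs, and the two minimum values coincide: min_{ν,μ} L(ν,μ) = min_{ν,μ} L̃(ν,μ). -/

import Mathlib

/-! Both objectives share the linear and the `φ` terms and differ only in the `μ`-penalty:
`∑ exp (-μ s - 1) = Z / e` in `L` against `log Z` in `L̃`, where `Z = ∑ exp (-μ s)`. Since
`log Z ≤ Z / e`, we get `L̃ ≤ L` everywhere. Conversely, shifting `ν` by `k` and `μ` by `(1 - γ) k`
leaves every residual `e_{ν,μ}` unchanged (the rows of `T` sum to one), so with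
`(1 - γ) k = log Z - 1` the value of `L` at the shifted pair is exactly `L̃(ν, μ)`. The shift of a
minimiser of `L̃` therefore minimises `L`, with the same value. -/

open scoped BigOperators

noncomputable def eFn {S A : Type*} [Fintype S] (γ : ℝ) (T : S → A → S → ℝ)
    (ν μ : S → ℝ) (s : S) (a : A) : ℝ :=
  μ s + γ * ∑ s', T s a s' * ν s' - ν s

noncomputable def Lobj {S A : Type*} [Fintype S] [Fintype A] (γ : ℝ) (p0 : S → ℝ)
    (T : S → A → S → ℝ) (dD : S → A → ℝ) (α : ℝ) (φ : ℝ → ℝ) (ν μ : S → ℝ) : ℝ :=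
  (1 - γ) * ∑ s, p0 s * ν s
    + ∑ s, ∑ a, dD s a * (α * φ (eFn γ T ν μ s a / α))
    + ∑ s, Real.exp (-μ s - 1)

noncomputable def Ltilde {S A : Type*} [Fintype S] [Fintype A] (γ : ℝ) (p0 : S → ℝ)
    (T : S → A → S → ℝ) (dD : S → A → ℝ) (α : ℝ) (φ : ℝ → ℝ) (ν μ : S → ℝ) : ℝ :=
  (1 - γ) * ∑ s, p0 s * ν s
    + ∑ s, ∑ a, dD s a * (α * φ (eFn γ T ν μ s a / α))
    + Real.log (∑ s, Real.exp (-μ s))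

/-! Both objectives share the linear and the `φ` terms and differ only in the `μ`-penalty:
`∑ exp (-μ s - 1) = Z / e` in `L` against `log Z` in `L̃`, where `Z = ∑ exp (-μ s)`. Since
`log Z ≤ Z / e`, we get `L̃ ≤ L` everywhere. Conversely, shifting `ν` by `k` and `μ` by `(1 - γ) k`
leaves every residual `e_{ν,μ}` unchanged (the rows of `T` sum to one), so with
`(1 - γ) k = log Z - 1` the value of `L` at the shifted pair is exactly `L̃(ν, μ)`. The shift of a
minimiser of `L̃` therefore minimises `L`, with the same value. -/

open Finset

lemma Real.log_le_mul_exp_neg_one {x : ℝ} (hx : 0 < x) : Real.log x ≤ x * Real.exp (-1) := by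
  have h := Real.add_one_le_exp (Real.log x - 1)
  rwa [sub_add_cancel, sub_eq_add_neg, Real.exp_add, Real.exp_log hx] at h

section Objectives

variable {S A : Type*} [Fintype S]

lemma eFn_add_const {γ : ℝ} {T : S → A → S → ℝ} (hTsum : ∀ s a, ∑ s', T s a s' = 1)
    (ν μ : S → ℝ) (k : ℝ) (s : S) (a : A) :
    eFn γ T (fun s => ν s + k) (fun s => μ s + (1 - γ) * k) s a = eFn γ T ν μ s a := by
  simp only [eFn, mul_add, sum_add_distrib, ← sum_mul, hTsum s a]
  ring

lemma sum_exp_neg_sub_one (μ : S → ℝ) :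
    ∑ s, Real.exp (-μ s - 1) = (∑ s, Real.exp (-μ s)) * Real.exp (-1) := by
  simp only [sum_mul, ← Real.exp_add, sub_eq_add_neg]

variable [Fintype A]

lemma Ltilde_le_Lobj [Nonempty S] (γ : ℝ) (p0 : S → ℝ) (T : S → A → S → ℝ) (dD : S → A → ℝ)
    (α : ℝ) (φ : ℝ → ℝ) (ν μ : S → ℝ) :
    Ltilde γ p0 T dD α φ ν μ ≤ Lobj γ p0 T dD α φ ν μ := by
  have hZ : 0 < ∑ s, Real.exp (-μ s) := sum_pos (fun s _ => Real.exp_pos _) univ_nonempty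
  unfold Ltilde Lobj
  rw [sum_exp_neg_sub_one]
  linarith [Real.log_le_mul_exp_neg_one hZ]

lemma Lobj_add_const_eq_Ltilde [Nonempty S] {γ : ℝ} {p0 : S → ℝ} (hp0sum : ∑ s, p0 s = 1)
    {T : S → A → S → ℝ} (hTsum : ∀ s a, ∑ s', T s a s' = 1) (dD : S → A → ℝ) (α : ℝ)
    (φ : ℝ → ℝ) (ν μ : S → ℝ) {k : ℝ}
    (hk : (1 - γ) * k = Real.log (∑ s, Real.exp (-μ s)) - 1) :
    Lobj γ p0 T dD α φ (fun s => ν s + k) (fun s => μ s + (1 - γ) * k) =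
      Ltilde γ p0 T dD α φ ν μ := by
  have hZ : 0 < ∑ s, Real.exp (-μ s) := sum_pos (fun s _ => Real.exp_pos _) univ_nonempty
  have hlinear : ∑ s, p0 s * (ν s + k) = ∑ s, p0 s * ν s + k := by
    simp only [mul_add, sum_add_distrib, ← sum_mul, hp0sum, one_mul]
  have hpenalty : ∑ s, Real.exp (-(μ s + (1 - γ) * k) - 1) = 1 := by
    have h : ∀ s, -(μ s + (1 - γ) * k) - 1 = -μ s + -Real.log (∑ s, Real.exp (-μ s)) := by
      intro s; rw [hk]; ring
    rw [sum_congr rfl fun s _ => by rw [h, Real.exp_add], ← sum_mul, Real.exp_neg,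
      Real.exp_log hZ, mul_inv_cancel₀ hZ.ne']
  unfold Lobj Ltilde
  simp only [eFn_add_const hTsum, hlinear, hpenalty]
  linear_combination hk

end Objectives

theorem stmt3_general {S A : Type*} [Fintype S] [Fintype A] [Nonempty S]
    (γ : ℝ) (hγ : γ ∈ Set.Ioo (0:ℝ) 1)
    (p0 : S → ℝ) (hp0sum : ∑ s, p0 s = 1)
    (T : S → A → S → ℝ)
    (hTsum : ∀ s a, ∑ s', T s a s' = 1)
    (dD : S → A → ℝ) (α : ℝ) (φ : ℝ → ℝ)
    (νt μt : S → ℝ)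
    (hmin : ∀ ν μ : S → ℝ, Ltilde γ p0 T dD α φ νt μt ≤ Ltilde γ p0 T dD α φ ν μ) :
    ∃ νs μs : S → ℝ,
      (∀ ν μ : S → ℝ, Lobj γ p0 T dD α φ νs μs ≤ Lobj γ p0 T dD α φ ν μ) ∧
        Lobj γ p0 T dD α φ νs μs = Ltilde γ p0 T dD α φ νt μt := by
  set k := (Real.log (∑ s, Real.exp (-μt s)) - 1) / (1 - γ)
  have hk : (1 - γ) * k = Real.log (∑ s, Real.exp (-μt s)) - 1 :=
    mul_div_cancel₀ _ (sub_ne_zero.mpr hγ.2.ne')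
  have hvalue := Lobj_add_const_eq_Ltilde hp0sum hTsum dD α φ νt μt hk
  refine ⟨_, _, fun ν μ => ?_, hvalue⟩
  calc _ = Ltilde γ p0 T dD α φ νt μt := hvalue
    _ ≤ Ltilde γ p0 T dD α φ ν μ := hmin ν μ
    _ ≤ Lobj γ p0 T dD α φ ν μ := Ltilde_le_Lobj γ p0 T dD α φ ν μ

theorem stmt3 {S A : Type*} [Fintype S] [Fintype A] [Nonempty S] [Nonempty A]
    (γ : ℝ) (hγ : γ ∈ Set.Ioo (0:ℝ) 1)
    (p0 : S → ℝ) (hp0 : ∀ s, 0 ≤ p0 s) (hp0sum : ∑ s, p0 s = 1)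
    (T : S → A → S → ℝ) (hT : ∀ s a s', 0 ≤ T s a s')
    (hTsum : ∀ s a, ∑ s', T s a s' = 1)
    (dD : S → A → ℝ) (hdD : ∀ s a, 0 ≤ dD s a) (hdDsum : ∑ s, ∑ a, dD s a = 1)
    (α : ℝ) (hα : 0 < α) (φ : ℝ → ℝ)
    (νt μt : S → ℝ)
    (hmin : ∀ ν μ : S → ℝ, Ltilde γ p0 T dD α φ νt μt ≤ Ltilde γ p0 T dD α φ ν μ) :
    ∃ νs μs : S → ℝ,
      (∀ ν μ : S → ℝ, Lobj γ p0 T dD α φ νs μs ≤ Lobj γ p0 T dD α φ ν μ) ∧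
        Lobj γ p0 T dD α φ νs μs = Ltilde γ p0 T dD α φ νt μt :=
  stmt3_general γ hγ p0 hp0sum T hTsum dD α φ νt μt hmin
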